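/- arXiv:2502.13743 — 4 statements merged into one kernel-verified Lean document; each statement's English description precedes it below -/
import Mathlib

section
/- Theorem 1 (reasoning from possible information, μ = 1): Let α be an L-sentence and Δ a finite set of L-sentences such that there exists a possible index i with Mᵢ ⊨ Δ. Then P₁(α|Δ) = (∑ᵢ ⟦α⟧ᵢ · χᵢ · p i) / (∑ᵢ χᵢ · p i), where χᵢ := 1 if p i > 0 and Mᵢ ⊨ Δ, and χᵢ := 0 otherwise. -/
open FirstOrder
open scoped Classical

variable {L : FirstOrder.Language} {ι : Type*}

/-- `Sat M α i` means the structure `M i` satisfies the sentence `α` (i.e. `M i ⊨ α`). -/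
def Sat (M : ι → Type*) [∀ i, L.Structure (M i)] (α : L.Sentence) (i : ι) : Prop :=
  FirstOrder.Language.Sentence.Realize (M := M i) α

/-- The indicator `⟦α⟧ᵢ`: `1` if `M i ⊨ α`, `0` otherwise (a natural number). -/
noncomputable def ind (M : ι → Type*) [∀ i, L.Structure (M i)]
    (α : L.Sentence) (i : ι) : ℕ :=
  if Sat M α i then 1 else 0

/-- `M i ⊨ S`: the structure `M i` satisfies every sentence in the finite set `S`. -/
def SatAll (M : ι → Type*) [∀ i, L.Structure (M i)]
    (S : Finset L.Sentence) (i : ι) : Prop :=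
  ∀ β ∈ S, Sat M β i

/-- `|Δ|ᵢ`: the number of sentences of `Δ` that are true in `M i`. -/
noncomputable def nSat (M : ι → Type*) [∀ i, L.Structure (M i)]
    (Δ : Finset L.Sentence) (i : ι) : ℕ :=
  (Δ.filter (fun β => Sat M β i)).card

/-- A finite set `S` of sentences is possible if some possible index satisfies all of it. -/
def PossibleSet (M : ι → Type*) [∀ i, L.Structure (M i)] (p : ι → ℝ)
    (S : Finset L.Sentence) : Prop :=
  ∃ i, 0 < p i ∧ SatAll M S i

/-- `MPS Δ`: the cardinality-maximal possible subsets of `Δ`. -/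
def MPS (M : ι → Type*) [∀ i, L.Structure (M i)] (p : ι → ℝ)
    (Δ : Finset L.Sentence) : Set (Finset L.Sentence) :=
  {S | S ⊆ Δ ∧ PossibleSet M p S ∧
    ∀ T ⊆ Δ, PossibleSet M p T → T.card ≤ S.card}

/-- `⟨Δ⟩`: the possible indices satisfying some cardinality-maximal possible subset of `Δ`. -/
def angleSet (M : ι → Type*) [∀ i, L.Structure (M i)] (p : ι → ℝ)
    (Δ : Finset L.Sentence) : Set ι :=
  {i | 0 < p i ∧ ∃ S ∈ MPS M p Δ, SatAll M S i}

/-- `L(α|Δ) = (∑_{i∈⟨Δ⟩} ⟦α⟧ᵢ·p i) / (∑_{i∈⟨Δ⟩} p i)`. -/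
noncomputable def Lcond (M : ι → Type*) [∀ i, L.Structure (M i)] (p : ι → ℝ)
    (α : L.Sentence) (Δ : Finset L.Sentence) : ℝ :=
  (∑ᶠ i ∈ angleSet M p Δ, (ind M α i : ℝ) * p i) / (∑ᶠ i ∈ angleSet M p Δ, p i)

/-- `P_μ(α|Δ)`, with natural-number exponents (so `0 ^ 0 = 1`). -/
noncomputable def Pcond (M : ι → Type*) [∀ i, L.Structure (M i)] (p : ι → ℝ)
    (μ : ℝ) (α : L.Sentence) (Δ : Finset L.Sentence) : ℝ :=
  (∑ᶠ i, μ ^ (ind M α i) * (1 - μ) ^ (1 - ind M α i) *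
      (μ ^ (nSat M Δ i) * (1 - μ) ^ (Δ.card - nSat M Δ i)) * p i) /
  (∑ᶠ i, μ ^ (nSat M Δ i) * (1 - μ) ^ (Δ.card - nSat M Δ i) * p i)

/-- A finite set `S` of sentences is consistent if some index satisfies all of it. -/
def ConsistentSet (M : ι → Type*) [∀ i, L.Structure (M i)]
    (S : Finset L.Sentence) : Prop :=
  ∃ i, SatAll M S i

/-- `MCS Δ`: the cardinality-maximal consistent subsets of `Δ`. -/
def MCS (M : ι → Type*) [∀ i, L.Structure (M i)]
    (Δ : Finset L.Sentence) : Set (Finset L.Sentence) :=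
  {S | S ⊆ Δ ∧ ConsistentSet M S ∧
    ∀ T ⊆ Δ, ConsistentSet M T → T.card ≤ S.card}

/-- `⟪Δ⟫`: the indices satisfying some cardinality-maximal consistent subset of `Δ`. -/
def dangleSet (M : ι → Type*) [∀ i, L.Structure (M i)]
    (Δ : Finset L.Sentence) : Set ι :=
  {i | ∃ S ∈ MCS M Δ, SatAll M S i}

/-! At `μ = 1` the weight `1 ^ |Δ|ᵢ * 0 ^ (|Δ| - |Δ|ᵢ)` is `1` exactly when `|Δ|ᵢ = |Δ|`,
i.e. when `Mᵢ ⊨ Δ`, and multiplied by `p i ≥ 0` it may as well also require `p i > 0`.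
So numerator and denominator of `P₁(α|Δ)` agree term by term with those of the right-hand
side. -/

section WeightsAtOne

variable (M : ι → Type*) [∀ i, L.Structure (M i)]

theorem nSat_le_card (Δ : Finset L.Sentence) (i : ι) : nSat M Δ i ≤ Δ.card :=
  Finset.card_filter_le _ _

theorem nSat_eq_card_iff (Δ : Finset L.Sentence) (i : ι) :
    nSat M Δ i = Δ.card ↔ SatAll M Δ i :=
  Finset.card_filter_eq_iff

theorem one_pow_ind_mul_zero_pow (α : L.Sentence) (i : ι) :
    (1 : ℝ) ^ ind M α i * (1 - 1) ^ (1 - ind M α i) = ind M α i := by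
  by_cases hα : Sat M α i <;> simp [ind, hα]

theorem one_pow_nSat_mul_zero_pow (Δ : Finset L.Sentence) (i : ι) :
    (1 : ℝ) ^ nSat M Δ i * (1 - 1) ^ (Δ.card - nSat M Δ i) =
      if SatAll M Δ i then 1 else 0 := by
  have hle := nSat_le_card M Δ i
  have hiff := nSat_eq_card_iff M Δ i
  split_ifs with hΔ
  · simp [hiff.mpr hΔ]
  · have hgap : Δ.card - nSat M Δ i ≠ 0 := by
      have := mt hiff.mp hΔ
      omega
    simp [hgap]

theorem likelihood_one_mul_eq_ite_mul {p : ι → ℝ} (hp0 : ∀ i, 0 ≤ p i)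
    (Δ : Finset L.Sentence) (i : ι) :
    (1 : ℝ) ^ nSat M Δ i * (1 - 1) ^ (Δ.card - nSat M Δ i) * p i =
      (if 0 < p i ∧ SatAll M Δ i then (1 : ℝ) else 0) * p i := by
  rw [one_pow_nSat_mul_zero_pow]
  rcases (hp0 i).eq_or_lt with hpi | hpi
  · simp [← hpi]
  · simp [hpi]

end WeightsAtOne

theorem stmt3_general
    (M : ι → Type*) [∀ i, L.Structure (M i)]
    (p : ι → ℝ) (hp0 : ∀ i, 0 ≤ p i)
    (α : L.Sentence) (Δ : Finset L.Sentence) :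
    Pcond M p 1 α Δ =
      (∑ᶠ i, (ind M α i : ℝ) *
          (if 0 < p i ∧ SatAll M Δ i then (1 : ℝ) else 0) * p i) /
        (∑ᶠ i, (if 0 < p i ∧ SatAll M Δ i then (1 : ℝ) else 0) * p i) := by
  unfold Pcond
  congr 1 <;> refine finsum_congr fun i => ?_
  · rw [one_pow_ind_mul_zero_pow, mul_assoc, likelihood_one_mul_eq_ite_mul M hp0, mul_assoc]
  · exact likelihood_one_mul_eq_ite_mul M hp0 Δ i

/-- **Theorem 1** (reasoning from possible information, `μ = 1`): if some possible index
satisfies `Δ`, then `P₁(α|Δ) = (∑ᵢ ⟦α⟧ᵢ·χᵢ·p i) / (∑ᵢ χᵢ·p i)` where `χᵢ = 1` iff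
`p i > 0` and `Mᵢ ⊨ Δ`. -/
theorem stmt3 [Countable ι]
    (M : ι → Type*) [∀ i, L.Structure (M i)] [∀ i, Nonempty (M i)]
    (p : ι → ℝ) (hp0 : ∀ i, 0 ≤ p i) (hpfin : (Function.support p).Finite)
    (hp1 : ∑ᶠ i, p i = 1)
    (α : L.Sentence) (Δ : Finset L.Sentence)
    (hposs : ∃ i, 0 < p i ∧ SatAll M Δ i) :
    Pcond M p 1 α Δ =
      (∑ᶠ i, (ind M α i : ℝ) *
          (if 0 < p i ∧ SatAll M Δ i then (1 : ℝ) else 0) * p i) /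
        (∑ᶠ i, (if 0 < p i ∧ SatAll M Δ i then (1 : ℝ) else 0) * p i) :=
  stmt3_general M p hp0 α Δ
end

section
/- Corollary (characterization of certain reasoning at μ = 1): Let α be an L-sentence and Δ a finite set of L-sentences such that there exists a possible index i with Mᵢ ⊨ Δ. Then P₁(α|Δ) = 1 if and only if Δ ⊫ α (α is an empirical consequence of Δ). -/
open FirstOrder
open scoped Classical

variable {L : FirstOrder.Language} {ι : Type*}

/-!
At `μ = 1` the weight `μ ^ |Δ|ᵢ * (1 - μ) ^ (|Δ| - |Δ|ᵢ)` is `1` when `M i ⊨ Δ` and `0` otherwise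
(`0 ^ 0 = 1`), so `P₁(α|Δ)` is the `p`-mass of the models of `Δ ∪ {α}` divided by the `p`-mass of
the models of `Δ`. Since the first set is contained in the second and the weights are nonnegative,
the quotient is `1` exactly when the difference of the two sets carries no mass, i.e. when every
possible model of `Δ` satisfies `α`; the possible model of `Δ` makes the denominator positive.
-/

section FinsumNonneg

variable {κ M : Type*} [AddCommMonoid M] [PartialOrder M] [IsOrderedCancelAddMonoid M]
  {f : κ → M} {s t : Set κ}

theorem finsum_mem_eq_zero_iff_of_nonneg (hf : ∀ i, 0 ≤ f i) (hfin : (Function.support f).Finite) :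
    ∑ᶠ i ∈ s, f i = 0 ↔ ∀ i ∈ s, f i = 0 := by
  refine ⟨fun h => ?_, finsum_mem_eq_zero_of_forall_eq_zero⟩
  by_contra! ⟨i, hi, hfi⟩
  exact (finsum_cond_pos (fun i _ => hf i) ⟨i, hi, (hf i).lt_of_ne' hfi⟩
    (hfin.subset Set.inter_subset_left)).ne' h

theorem finsum_mem_eq_finsum_mem_iff_of_subset (hf : ∀ i, 0 ≤ f i)
    (hfin : (Function.support f).Finite) (hst : s ⊆ t) :
    ∑ᶠ i ∈ s, f i = ∑ᶠ i ∈ t, f i ↔ ∀ i ∈ t \ s, f i = 0 := by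
  rw [← finsum_mem_add_sdiff' hst (hfin.subset Set.inter_subset_right), left_eq_add,
    finsum_mem_eq_zero_iff_of_nonneg hf hfin]

end FinsumNonneg

section CertainReasoning

variable (M : ι → Type*) [∀ i, L.Structure (M i)]

theorem one_sub_ind_eq_zero_iff (α : L.Sentence) (i : ι) : 1 - ind M α i = 0 ↔ Sat M α i := by
  unfold ind
  split_ifs <;> simp [*]

theorem card_sub_nSat_eq_zero_iff (Δ : Finset L.Sentence) (i : ι) :
    Δ.card - nSat M Δ i = 0 ↔ SatAll M Δ i := by
  rw [Nat.sub_eq_zero_iff_le, nSat, (Finset.card_filter_le Δ _).ge_iff_eq, Finset.card_filter_eq_iff]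
  rfl

theorem Pcond_one (p : ι → ℝ) (α : L.Sentence) (Δ : Finset L.Sentence) :
    Pcond M p 1 α Δ =
      (∑ᶠ i ∈ {i | SatAll M Δ i ∧ Sat M α i}, p i) / ∑ᶠ i ∈ {i | SatAll M Δ i}, p i := by
  simp only [Pcond, one_pow, one_mul, sub_self, zero_pow_eq, one_sub_ind_eq_zero_iff,
    card_sub_nSat_eq_zero_iff, finsum_mem_def]
  congr 1 <;> refine finsum_congr fun i => ?_ <;> by_cases hα : Sat M α i <;>
    by_cases hΔ : SatAll M Δ i <;> simp [hα, hΔ]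

end CertainReasoning

theorem stmt4_general
    (M : ι → Type*) [∀ i, L.Structure (M i)]
    (p : ι → ℝ) (hp0 : ∀ i, 0 ≤ p i) (hpfin : (Function.support p).Finite)
    (α : L.Sentence) (Δ : Finset L.Sentence)
    (hposs : ∃ i, 0 < p i ∧ SatAll M Δ i) :
    Pcond M p 1 α Δ = 1 ↔ ∀ i, 0 < p i → SatAll M Δ i → Sat M α i := by
  obtain ⟨i₀, hpi₀, hsat₀⟩ := hposs
  have hmass_pos : 0 < ∑ᶠ i ∈ {i | SatAll M Δ i}, p i :=
    finsum_cond_pos (fun i _ => hp0 i) ⟨i₀, hsat₀, hpi₀⟩ (hpfin.subset Set.inter_subset_left)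
  rw [Pcond_one, div_eq_one_iff_eq hmass_pos.ne',
    finsum_mem_eq_finsum_mem_iff_of_subset hp0 hpfin fun i hi => hi.1]
  refine forall_congr' fun i => ?_
  simp only [Set.mem_sdiff, Set.mem_ofPred_eq, (hp0 i).lt_iff_ne', ne_eq]
  tauto

/-- **Corollary** (characterization of certain reasoning at `μ = 1`): if some possible index
satisfies `Δ`, then `P₁(α|Δ) = 1` iff `α` is an empirical consequence of `Δ`. -/
theorem stmt4 [Countable ι]
    (M : ι → Type*) [∀ i, L.Structure (M i)] [∀ i, Nonempty (M i)]
    (p : ι → ℝ) (hp0 : ∀ i, 0 ≤ p i) (hpfin : (Function.support p).Finite)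
    (hp1 : ∑ᶠ i, p i = 1)
    (α : L.Sentence) (Δ : Finset L.Sentence)
    (hposs : ∃ i, 0 < p i ∧ SatAll M Δ i) :
    Pcond M p 1 α Δ = 1 ↔ ∀ i, 0 < p i → SatAll M Δ i → Sat M α i :=
  stmt4_general M p hp0 hpfin α Δ hposs
end

section
/- Theorem 2 (reasoning from impossible information, μ → 1): For every L-sentence α and every finite set Δ of L-sentences, the function μ ↦ P_μ(α|Δ) tends, as μ → 1 from the left (i.e., along the filter 𝓝[<] 1 restricted to (0,1)), to L(α|Δ) = (∑_{i∈⟨Δ⟩} ⟦α⟧ᵢ·p i) / (∑_{i∈⟨Δ⟩} p i). -/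
/-!
Let `m` be the largest number of sentences of `Δ` true at a possible index. Both sums in
`P_μ(α|Δ)` carry the factor `(1 - μ) ^ (|Δ| - m)`; cancelling it leaves two polynomials in `μ`,
and at `μ = 1` only the possible indices satisfying exactly `m` sentences of `Δ` survive. These
are precisely the indices of `⟨Δ⟩`: the maximal possible subsets of `Δ` are the sets of sentences
of `Δ` true at such indices.
-/

open FirstOrder
open scoped Classical

variable {L : FirstOrder.Language} {ι : Type*}

open Filter Topology

theorem tendsto_sum_mul_one_sub_pow (s : Finset ι) (k : ι → ℕ) {f : ι → ℝ → ℝ}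
    (hf : ∀ i ∈ s, ContinuousAt (f i) 1) :
    Tendsto (fun μ => ∑ i ∈ s, f i μ * (1 - μ) ^ k i) (𝓝 1)
      (𝓝 (∑ i ∈ s with k i = 0, f i 1)) := by
  rw [Finset.sum_filter]
  refine tendsto_finsetSum s fun i hi => ?_
  have hpow : ContinuousAt (fun μ : ℝ => (1 - μ) ^ k i) 1 := by fun_prop
  have hval : f i 1 * (1 - 1) ^ k i = if k i = 0 then f i 1 else 0 := by
    by_cases hk : k i = 0 <;> simp [hk]
  exact hval ▸ ((hf i hi).mul hpow).tendsto

theorem sum_mul_one_sub_pow_eq {s : Finset ι} {k : ι → ℕ} {K : ℕ} (hK : ∀ i ∈ s, K ≤ k i)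
    (f : ι → ℝ) (μ : ℝ) :
    ∑ i ∈ s, f i * (1 - μ) ^ k i = (1 - μ) ^ K * ∑ i ∈ s, f i * (1 - μ) ^ (k i - K) := by
  rw [Finset.mul_sum]
  refine Finset.sum_congr rfl fun i hi => ?_
  rw [← pow_mul_pow_sub (1 - μ) (hK i hi)]
  ring

theorem tendsto_sum_div_sum_mul_one_sub_pow {s : Finset ι} {k : ι → ℕ} {K : ℕ}
    (hK : ∀ i ∈ s, K ≤ k i) {f g : ι → ℝ → ℝ} (hf : ∀ i ∈ s, ContinuousAt (f i) 1)
    (hg : ∀ i ∈ s, ContinuousAt (g i) 1) (hne : ∑ i ∈ s with k i = K, g i 1 ≠ 0) :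
    Tendsto (fun μ => (∑ i ∈ s, f i μ * (1 - μ) ^ k i) / ∑ i ∈ s, g i μ * (1 - μ) ^ k i)
      (𝓝[≠] 1)
      (𝓝 ((∑ i ∈ s with k i = K, f i 1) / ∑ i ∈ s with k i = K, g i 1)) := by
  have hfilter : s.filter (fun i => k i - K = 0) = s.filter (fun i => k i = K) :=
    Finset.filter_congr fun i hi => by have := hK i hi; omega
  have hlim := (tendsto_sum_mul_one_sub_pow s (fun i => k i - K) hf).div
    (tendsto_sum_mul_one_sub_pow s (fun i => k i - K) hg) (by rwa [hfilter])
  rw [hfilter] at hlim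
  refine (hlim.mono_left nhdsWithin_le_nhds).congr' ?_
  filter_upwards [self_mem_nhdsWithin] with μ hμ
  rw [sum_mul_one_sub_pow_eq hK, sum_mul_one_sub_pow_eq hK,
    mul_div_mul_left _ _ (pow_ne_zero _ (sub_ne_zero.2 (Ne.symm hμ))), Pi.div_apply]

section Semantics

variable (M : ι → Type*) [∀ i, L.Structure (M i)]

theorem card_le_nSat {S Δ : Finset L.Sentence} {i : ι} (hS : S ⊆ Δ) (hi : SatAll M S i) :
    S.card ≤ nSat M Δ i :=
  Finset.card_le_card fun β hβ => Finset.mem_filter.2 ⟨hS hβ, hi β hβ⟩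

theorem possibleSet_filter_sat {p : ι → ℝ} {i : ι} (hi : 0 < p i) (Δ : Finset L.Sentence) :
    PossibleSet M p (Δ.filter (Sat M · i)) :=
  ⟨i, hi, fun _ hβ => (Finset.mem_filter.1 hβ).2⟩

theorem zero_pow_one_sub_ind (α : L.Sentence) (i : ι) :
    (0 : ℝ) ^ (1 - ind M α i) = ind M α i := by
  unfold ind
  split_ifs <;> simp

variable {p : ι → ℝ} {F : Finset ι} {Δ : Finset L.Sentence}

theorem angleSet_eq (hF : ∀ i, i ∈ F ↔ 0 < p i) :
    angleSet M p Δ = ↑(F.filter fun i => nSat M Δ i = F.sup (nSat M Δ)) := by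
  have hpossible : ∀ T ⊆ Δ, PossibleSet M p T → T.card ≤ F.sup (nSat M Δ) :=
    fun T hT ⟨j, hj, hTj⟩ => (card_le_nSat M hT hTj).trans (Finset.le_sup ((hF j).2 hj))
  ext i
  simp only [Finset.coe_filter, angleSet, hF]
  constructor
  · rintro ⟨hi, S, ⟨hSΔ, ⟨j, hj, hSj⟩, hSmax⟩, hSi⟩
    obtain ⟨j₀, hj₀, hj₀max⟩ := Finset.exists_mem_eq_sup F ⟨j, (hF j).2 hj⟩ (nSat M Δ)
    refine ⟨hi, le_antisymm (Finset.le_sup ((hF i).2 hi)) ?_⟩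
    calc F.sup (nSat M Δ) = nSat M Δ j₀ := hj₀max
      _ ≤ S.card := hSmax _ (Finset.filter_subset _ _)
          (possibleSet_filter_sat M ((hF j₀).1 hj₀) Δ)
      _ ≤ nSat M Δ i := card_le_nSat M hSΔ hSi
  · rintro ⟨hi, hmax⟩
    refine ⟨hi, Δ.filter (Sat M · i), ⟨Finset.filter_subset _ _,
      possibleSet_filter_sat M hi Δ, fun T hT hTp => (hpossible T hT hTp).trans_eq hmax.symm⟩,
      fun _ hβ => (Finset.mem_filter.1 hβ).2⟩

theorem Lcond_eq (hF : ∀ i, i ∈ F ↔ 0 < p i) (α : L.Sentence) :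
    Lcond M p α Δ =
      (∑ i ∈ F with nSat M Δ i = F.sup (nSat M Δ), (ind M α i : ℝ) * p i) /
        ∑ i ∈ F with nSat M Δ i = F.sup (nSat M Δ), p i := by
  rw [Lcond, angleSet_eq M hF, finsum_mem_coe_finset, finsum_mem_coe_finset]

theorem Pcond_eq (hF : Function.support p ⊆ F) (μ : ℝ) (α : L.Sentence) :
    Pcond M p μ α Δ =
      (∑ i ∈ F, μ ^ ind M α i * (1 - μ) ^ (1 - ind M α i) * μ ^ nSat M Δ i * p i *
          (1 - μ) ^ (Δ.card - nSat M Δ i)) /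
        ∑ i ∈ F, μ ^ nSat M Δ i * p i * (1 - μ) ^ (Δ.card - nSat M Δ i) := by
  rw [Pcond, finsum_eq_sum_of_support_subset _ ((Function.support_mul_subset_right _ p).trans hF),
    finsum_eq_sum_of_support_subset _ ((Function.support_mul_subset_right _ p).trans hF)]
  congr 1 <;> exact Finset.sum_congr rfl fun i _ => by ring

end Semantics

theorem stmt6_general
    (M : ι → Type*) [∀ i, L.Structure (M i)]
    (p : ι → ℝ) (hp0 : ∀ i, 0 ≤ p i) (hpfin : (Function.support p).Finite)
    (α : L.Sentence) (Δ : Finset L.Sentence) :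
    Filter.Tendsto (fun μ : ℝ => Pcond M p μ α Δ)
      (nhdsWithin 1 (Set.Ioo (0 : ℝ) 1)) (nhds (Lcond M p α Δ)) := by
  obtain ⟨F, hF⟩ : ∃ F : Finset ι, ∀ i, i ∈ F ↔ 0 < p i :=
    ⟨hpfin.toFinset, fun i => hpfin.mem_toFinset.trans (hp0 i).lt_iff_ne'.symm⟩
  simp_rw [Pcond_eq M (fun i hi => (hF i).2 ((hp0 i).lt_of_ne' hi)), Lcond_eq M hF]
  rcases F.eq_empty_or_nonempty with hF₀ | hFne
  · -- no possible index: both sides are the junk value `0 / 0 = 0`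
    simp [hF₀]
  set m := F.sup (nSat M Δ)
  have hle : ∀ i ∈ F, nSat M Δ i ≤ m := fun i hi => Finset.le_sup hi
  have hm : m ≤ Δ.card := Finset.sup_le fun i _ => Finset.card_filter_le _ _
  have hfilter : F.filter (fun i => Δ.card - nSat M Δ i = Δ.card - m) =
      F.filter (fun i => nSat M Δ i = m) :=
    Finset.filter_congr fun i hi => by have := hle i hi; omega
  obtain ⟨j, hj, hjmax⟩ := Finset.exists_mem_eq_sup F hFne (nSat M Δ)
  have hpos : 0 < ∑ i ∈ F with nSat M Δ i = m, p i :=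
    Finset.sum_pos (fun i hi => (hF i).1 (Finset.mem_filter.1 hi).1)
      ⟨j, Finset.mem_filter.2 ⟨hj, hjmax.symm⟩⟩
  have hlim := tendsto_sum_div_sum_mul_one_sub_pow (s := F) (K := Δ.card - m)
    (fun i hi => Nat.sub_le_sub_left (hle i hi) _)
    (f := fun i μ => μ ^ ind M α i * (1 - μ) ^ (1 - ind M α i) * μ ^ nSat M Δ i * p i)
    (g := fun i μ => μ ^ nSat M Δ i * p i) (fun _ _ => by fun_prop) (fun _ _ => by fun_prop)
    (by simpa [hfilter] using hpos.ne')
  simp only [hfilter, one_pow, one_mul, mul_one, sub_self, zero_pow_one_sub_ind] at hlim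
  exact hlim.mono_left (nhdsWithin_mono _ fun μ hμ => hμ.2.ne)

/-- **Theorem 2** (reasoning from impossible information, `μ → 1`): as `μ → 1` from the left
along `(0,1)`, `P_μ(α|Δ)` tends to `L(α|Δ) = (∑_{i∈⟨Δ⟩} ⟦α⟧ᵢ·p i) / (∑_{i∈⟨Δ⟩} p i)`. -/
theorem stmt6 [Countable ι]
    (M : ι → Type*) [∀ i, L.Structure (M i)] [∀ i, Nonempty (M i)]
    (p : ι → ℝ) (hp0 : ∀ i, 0 ≤ p i) (hpfin : (Function.support p).Finite)
    (hp1 : ∑ᶠ i, p i = 1)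
    (α : L.Sentence) (Δ : Finset L.Sentence) :
    Filter.Tendsto (fun μ : ℝ => Pcond M p μ α Δ)
      (nhdsWithin 1 (Set.Ioo (0 : ℝ) 1)) (nhds (Lcond M p α Δ)) :=
  stmt6_general M p hp0 hpfin α Δ
end

section
/- Corollary (certain reasoning at μ → 1 via cardinality-maximal possible subsets): For every L-sentence α and finite set Δ of L-sentences, L(α|Δ) = 1 if and only if S ⊫ α for every cardinality-maximal possible subset S ∈ MPS(Δ). -/
open FirstOrder
open scoped Classical

variable {L : FirstOrder.Language} {ι : Type*}

/-! `L(α|Δ)` is an average of the indicator `⟦α⟧` over `⟨Δ⟩` with positive weights, so it equals `1`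
exactly when `α` holds throughout `⟨Δ⟩` — provided the denominator is not the junk `0`. That is
ensured because some index is possible: then `∅` is a possible subset of `Δ`, so `MPS(Δ)` is
nonempty, and so is `⟨Δ⟩`. -/

theorem exists_pos_of_finsum_pos {ι R : Type*} [AddCommMonoid R] [LinearOrder R]
    [IsOrderedAddMonoid R] {f : ι → R} (hf : 0 < ∑ᶠ i, f i) : ∃ i, 0 < f i := by
  by_contra! h
  exact hf.not_ge (finsum_induction (· ≤ 0) le_rfl (fun _ _ => add_nonpos) h)

theorem Set.Finite.finsum_mem_div_finsum_mem_eq_one_iff {ι : Type*} {s : Set ι} (hs : s.Finite)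
    (hne : s.Nonempty) {f g : ι → ℝ} (hg : ∀ i ∈ s, 0 < g i) (hfg : ∀ i ∈ s, f i ≤ g i) :
    (∑ᶠ i ∈ s, f i) / ∑ᶠ i ∈ s, g i = 1 ↔ ∀ i ∈ s, f i = g i := by
  have hsum_pos : 0 < ∑ i ∈ hs.toFinset, g i :=
    Finset.sum_pos (fun i hi => hg i (hs.mem_toFinset.mp hi)) (hs.toFinset_nonempty.mpr hne)
  rw [finsum_mem_eq_finite_toFinset_sum _ hs, finsum_mem_eq_finite_toFinset_sum _ hs,
    div_eq_one_iff_eq hsum_pos.ne',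
    Finset.sum_eq_sum_iff_of_le fun i hi => hfg i (hs.mem_toFinset.mp hi)]
  simp only [Set.Finite.mem_toFinset]

section

variable {M : ι → Type*} [∀ i, L.Structure (M i)] {p : ι → ℝ}

theorem ind_mul_le {i : ι} (hi : 0 ≤ p i) (α : L.Sentence) : (ind M α i : ℝ) * p i ≤ p i := by
  unfold ind
  split_ifs <;> simp [hi]

theorem ind_mul_eq_self_iff {i : ι} (hi : 0 < p i) (α : L.Sentence) :
    (ind M α i : ℝ) * p i = p i ↔ Sat M α i := by
  unfold ind
  split_ifs with h <;> simp [h, hi.ne]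

theorem possibleSet_empty_iff : PossibleSet M p (∅ : Finset L.Sentence) ↔ ∃ i, 0 < p i := by
  simp [PossibleSet, SatAll]

theorem MPS_nonempty (hp : ∃ i, 0 < p i) (Δ : Finset L.Sentence) : (MPS M p Δ).Nonempty := by
  obtain ⟨S, hS, hS_max⟩ := Finset.exists_max_image (Δ.powerset.filter (PossibleSet M p))
    Finset.card ⟨∅, by simpa [possibleSet_empty_iff] using hp⟩
  rw [Finset.mem_filter, Finset.mem_powerset] at hS
  exact ⟨S, hS.1, hS.2, fun T hT hT_poss => hS_max T (by simp [hT, hT_poss])⟩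

theorem angleSet_nonempty (hp : ∃ i, 0 < p i) (Δ : Finset L.Sentence) :
    (angleSet M p Δ).Nonempty := by
  obtain ⟨S, hS⟩ := MPS_nonempty (M := M) hp Δ
  obtain ⟨i, hi, hSi⟩ := hS.2.1
  exact ⟨i, hi, S, hS, hSi⟩

theorem angleSet_subset_support (Δ : Finset L.Sentence) :
    angleSet M p Δ ⊆ Function.support p :=
  fun _ hi => hi.1.ne'

theorem Lcond_eq_one_iff {α : L.Sentence} {Δ : Finset L.Sentence}
    (hfin : (angleSet M p Δ).Finite) (hne : (angleSet M p Δ).Nonempty) :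
    Lcond M p α Δ = 1 ↔ ∀ i ∈ angleSet M p Δ, Sat M α i := by
  rw [Lcond, hfin.finsum_mem_div_finsum_mem_eq_one_iff hne (fun i hi => hi.1)
    (fun i hi => ind_mul_le hi.1.le α)]
  exact forall₂_congr fun i hi => ind_mul_eq_self_iff hi.1 α

end

theorem stmt8_general
    (M : ι → Type*) [∀ i, L.Structure (M i)]
    (p : ι → ℝ) (hpfin : (Function.support p).Finite)
    (hp1 : ∑ᶠ i, p i = 1)
    (α : L.Sentence) (Δ : Finset L.Sentence) :
    Lcond M p α Δ = 1 ↔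
      ∀ S ∈ MPS M p Δ, ∀ i, 0 < p i → SatAll M S i → Sat M α i := by
  have hp : ∃ i, 0 < p i := exists_pos_of_finsum_pos (hp1 ▸ one_pos)
  rw [Lcond_eq_one_iff (hpfin.subset (angleSet_subset_support Δ))
    (angleSet_nonempty (M := M) hp Δ)]
  exact ⟨fun h S hS i hi hSi => h i ⟨hi, S, hS, hSi⟩, fun h i ⟨hi, S, hS, hSi⟩ => h S hS i hi hSi⟩

/-- **Corollary** (certain reasoning at `μ → 1` via cardinality-maximal possible subsets):
`L(α|Δ) = 1` iff `S ⊫ α` for every `S ∈ MPS(Δ)`. -/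
theorem stmt8 [Countable ι]
    (M : ι → Type*) [∀ i, L.Structure (M i)] [∀ i, Nonempty (M i)]
    (p : ι → ℝ) (hp0 : ∀ i, 0 ≤ p i) (hpfin : (Function.support p).Finite)
    (hp1 : ∑ᶠ i, p i = 1)
    (α : L.Sentence) (Δ : Finset L.Sentence) :
    Lcond M p α Δ = 1 ↔
      ∀ S ∈ MPS M p Δ, ∀ i, 0 < p i → SatAll M S i → Sat M α i :=
  stmt8_general M p hpfin hp1 α Δ
end
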